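/- arXiv:1905.07957 — 6 statements merged into one kernel-verified Lean document; each statement's English description precedes it below -/
import Mathlib

section
/- Two finite groups G and H have the same orbit-counting sequence for simultaneous conjugation (i.e., α_{G,n} = α_{H,n} for all n ≥ 0) if and only if for every positive integer m, the number of elements of G with centralizer of cardinality m equals the number of elements of H with centralizer of cardinality m. -/
/-! By Burnside's lemma, `|G| α_{G,n} = ∑_g |Z_G(g)|^n = ∑_m c_G(m) m^n`, where `c_G(m)` is the
number of elements whose centralizer has order `m`. If the orbit counts of `G` and `H` agree, then
`|H| c_G` and `|G| c_H` have the same power sums in every exponent, hence are equal by the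
invertibility of Vandermonde matrices. As `c_G(|G|) > 0` (the identity), `H` has an element whose
centralizer has order `|G|`, so `|G| ≤ |H|`; by symmetry `|G| = |H|` and `c_G = c_H`. Conversely,
equal counts give a bijection `G ≃ H` preserving centralizer orders, so the power sums agree. -/

/-- Number of orbits of `G` acting on `G^n` by simultaneous conjugation. -/
noncomputable def alphaOrbits (G : Type*) [Group G] (n : ℕ) : ℕ :=
  Nat.card (Quotient (MulAction.orbitRel (ConjAct G) (Fin n → G)))

/-- Pairwise commuting `n`-tuples as a sub-`MulAction` of the conjugation action. -/
def commTuples (G : Type*) [Group G] (n : ℕ) : SubMulAction (ConjAct G) (Fin n → G) where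
  carrier := {x | ∀ i j, Commute (x i) (x j)}
  smul_mem' := by
    intro g x hx i j
    have h := (hx i j).map (MulAut.conj (ConjAct.ofConjAct g)).toMonoidHom
    simpa [ConjAct.smul_def, MulAut.conj_apply, mul_assoc] using h

/-- Number of orbits of `G` acting on pairwise-commuting `n`-tuples by
simultaneous conjugation. -/
noncomputable def betaOrbits (G : Type*) [Group G] (n : ℕ) : ℕ :=
  Nat.card (Quotient (MulAction.orbitRel (ConjAct G) (commTuples G n)))

open Finset MulAction

theorem Finset.eq_zero_of_forall_sum_mul_pow_eq_zero {ι R : Type*} [CommRing R] [IsDomain R]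
    {s : Finset ι} {x c : ι → R} (hx : Set.InjOn x s)
    (h : ∀ n : ℕ, ∑ i ∈ s, c i * x i ^ n = 0) : ∀ i ∈ s, c i = 0 := by
  let e := s.equivFin
  have hc : (fun k ↦ c (e.symm k)) = 0 := by
    refine Matrix.eq_zero_of_forall_pow_sum_mul_pow_eq_zero (f := fun k ↦ x (e.symm k))
      (fun k l hkl ↦ e.symm.injective (Subtype.ext (hx (e.symm k).2 (e.symm l).2 hkl)))
      fun n ↦ ?_
    calc ∑ k, c (e.symm k) * x (e.symm k) ^ (n : ℕ)
        = ∑ i : s, c i * x i ^ (n : ℕ) := e.symm.sum_comp fun i : s ↦ c i * x i ^ (n : ℕ)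
      _ = 0 := (sum_coe_sort s fun i ↦ c i * x i ^ (n : ℕ)).trans (h n)
  intro i hi
  simpa using congrFun hc (e ⟨i, hi⟩)

theorem Fintype.sum_comp_eq_sum_card_fiber_mul {α κ : Type*} [Fintype α] [DecidableEq κ]
    (φ : α → κ) {s : Finset κ} (hs : ∀ a, φ a ∈ s) (f : κ → ℕ) :
    ∑ a, f (φ a) = ∑ k ∈ s, Nat.card {a // φ a = k} * f k := by
  rw [← sum_fiberwise_of_maps_to' (fun a _ ↦ hs a)]
  refine Finset.sum_congr rfl fun k _ ↦ ?_
  rw [sum_const, smul_eq_mul, Nat.card_eq_fintype_card, Fintype.card_subtype]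

theorem mul_card_fiber_eq_of_forall_mul_sum_pow_eq {α β : Type*} [Fintype α] [Fintype β]
    {φ : α → ℕ} {ψ : β → ℕ} {a b : ℕ}
    (h : ∀ n : ℕ, a * ∑ x, φ x ^ n = b * ∑ y, ψ y ^ n) (m : ℕ) :
    a * Nat.card {x // φ x = m} = b * Nat.card {y // ψ y = m} := by
  -- `m` is inserted so that the argument also covers a value taken by neither `φ` nor `ψ`.
  let s := insert m (univ.image φ ∪ univ.image ψ)
  have hφ : ∀ x, φ x ∈ s := fun x ↦ by simp [s]
  have hψ : ∀ y, ψ y ∈ s := fun y ↦ by simp [s]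
  have hsum (n : ℕ) : ∑ k ∈ s, a * Nat.card {x // φ x = k} * k ^ n =
      ∑ k ∈ s, b * Nat.card {y // ψ y = k} * k ^ n := by
    simp only [mul_assoc, ← mul_sum, ← Fintype.sum_comp_eq_sum_card_fiber_mul _ hφ,
      ← Fintype.sum_comp_eq_sum_card_fiber_mul _ hψ, h n]
  have key := eq_zero_of_forall_sum_mul_pow_eq_zero (x := ((↑) : ℕ → ℤ))
    (c := fun k ↦ (a * Nat.card {x // φ x = k} : ℤ) - b * Nat.card {y // ψ y = k})
    Nat.cast_injective.injOn
    (fun n ↦ by simp only [sub_mul, sum_sub_distrib, sub_eq_zero]; exact_mod_cast hsum n)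
    m (mem_insert_self _ _)
  exact_mod_cast sub_eq_zero.mp key

theorem exists_equiv_comp_eq_of_forall_card_fiber_eq {α β γ : Type*} [Finite α] [Finite β]
    {φ : α → γ} {ψ : β → γ} (h : ∀ c, Nat.card {a // φ a = c} = Nat.card {b // ψ b = c}) :
    ∃ e : α ≃ β, ∀ a, ψ (e a) = φ a :=
  let e c := (Finite.card_eq.mp (h c)).some
  ⟨Equiv.ofFiberEquiv e, Equiv.ofFiberEquiv_map e⟩

section Centralizer

variable {G : Type*} [Group G]

theorem mem_fixedBy_conjAct_pi_iff {ι : Type*} (g : G) (x : ι → G) :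
    x ∈ fixedBy (ι → G) (ConjAct.toConjAct g) ↔ ∀ i, x i ∈ Subgroup.centralizer {g} := by
  simp only [mem_fixedBy, funext_iff, Pi.smul_apply, ConjAct.toConjAct_smul,
    Subgroup.mem_centralizer_singleton_iff, eq_mul_inv_iff_mul_eq, eq_comm]

theorem card_fixedBy_conjAct_pi {ι : Type*} [Finite ι] (g : G) :
    Nat.card (fixedBy (ι → G) (ConjAct.toConjAct g)) =
      Nat.card (Subgroup.centralizer {g}) ^ Nat.card ι := by
  rw [← Nat.card_fun]
  exact Nat.card_congr ((Equiv.subtypeEquivRight (mem_fixedBy_conjAct_pi_iff g)).trans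
    (Equiv.subtypePiEquivPi))

theorem alphaOrbits_mul_card [Fintype G] (n : ℕ) :
    alphaOrbits G n * Nat.card G = ∑ g : G, Nat.card (Subgroup.centralizer {g}) ^ n := by
  classical
  let : Fintype (Quotient (orbitRel (ConjAct G) (Fin n → G))) := Fintype.ofFinite _
  have burnside := sum_card_fixedBy_eq_card_orbits_mul_card_group (ConjAct G) (Fin n → G)
  simp only [← Nat.card_eq_fintype_card] at burnside
  rw [alphaOrbits, Nat.card_congr (ConjAct.toConjAct (G := G)).toEquiv, ← burnside,
    ← ConjAct.toConjAct.toEquiv.sum_comp]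
  simp only [MulEquiv.toEquiv_eq_coe, EquivLike.coe_coe, card_fixedBy_conjAct_pi, Nat.card_fin]

theorem card_fiber_card_centralizer_zero [Finite G] :
    Nat.card {g : G // Nat.card (Subgroup.centralizer {g}) = 0} = 0 :=
  Finite.card_eq_zero_iff.mpr ⟨fun g ↦ Nat.card_pos.ne' g.2⟩

theorem card_le_card_of_forall_mul_card_fiber_card_centralizer_eq {H : Type*} [Group H]
    [Finite G] [Finite H]
    (h : ∀ m, Nat.card H * Nat.card {g : G // Nat.card (Subgroup.centralizer {g}) = m} =
      Nat.card G * Nat.card {x : H // Nat.card (Subgroup.centralizer {x}) = m}) :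
    Nat.card G ≤ Nat.card H := by
  have hG : 0 < Nat.card {g : G // Nat.card (Subgroup.centralizer {g}) = Nat.card G} :=
    Nat.card_pos_iff.mpr ⟨⟨⟨1, by simp⟩⟩, inferInstance⟩
  have hH : 0 < Nat.card {x : H // Nat.card (Subgroup.centralizer {x}) = Nat.card G} :=
    Nat.pos_of_mul_pos_left (h (Nat.card G) ▸ Nat.mul_pos Nat.card_pos hG)
  obtain ⟨⟨x, hx⟩⟩ := (Nat.card_pos_iff.mp hH).1
  exact hx ▸ Subgroup.card_le_card_group _

end Centralizer

/-- Two finite groups have the same sequence of simultaneous-conjugacy orbit counts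
iff they have the same number of elements with centralizer of each cardinality. -/
theorem orbit_counts_eq_iff_class_equation_eq
    (G H : Type*) [Group G] [Fintype G] [Group H] [Fintype H] :
    (∀ n : ℕ, alphaOrbits G n = alphaOrbits H n) ↔
      ∀ m : ℕ, 0 < m →
        Nat.card {g : G // Nat.card (Subgroup.centralizer ({g} : Set G)) = m} =
          Nat.card {h : H // Nat.card (Subgroup.centralizer ({h} : Set H)) = m} := by
  constructor
  · intro hα
    have hmul := mul_card_fiber_eq_of_forall_mul_sum_pow_eq
        (φ := fun g : G ↦ Nat.card (Subgroup.centralizer {g}))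
        (ψ := fun x : H ↦ Nat.card (Subgroup.centralizer {x})) (a := Nat.card H)
        (b := Nat.card G) fun n ↦ by
      rw [← alphaOrbits_mul_card, ← alphaOrbits_mul_card, hα n]
      ring
    have hcard : Nat.card G = Nat.card H :=
      le_antisymm (card_le_card_of_forall_mul_card_fiber_card_centralizer_eq hmul)
        (card_le_card_of_forall_mul_card_fiber_card_centralizer_eq fun m ↦ (hmul m).symm)
    intro m _
    exact Nat.eq_of_mul_eq_mul_left Nat.card_pos (hcard ▸ hmul m)
  · intro hcount n
    obtain ⟨e, he⟩ := exists_equiv_comp_eq_of_forall_card_fiber_eq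
        (φ := fun g : G ↦ Nat.card (Subgroup.centralizer {g}))
        (ψ := fun x : H ↦ Nat.card (Subgroup.centralizer {x})) fun m ↦ by
      rcases m.eq_zero_or_pos with rfl | hm
      · rw [card_fiber_card_centralizer_zero, card_fiber_card_centralizer_zero]
      · exact hcount m hm
    refine Nat.eq_of_mul_eq_mul_right (Nat.card_pos (α := G)) ?_
    rw [alphaOrbits_mul_card, Nat.card_congr e, alphaOrbits_mul_card, ← e.sum_comp]
    exact Fintype.sum_congr _ _ fun g ↦ by rw [he]
end

section
/- Let β_{G,n} denote the number of G-orbits of commuting n-tuples in G under simultaneous conjugation. Then for n ≥ 1, β_{G,n} = Σ_{g} β_{Z_G(g), n−1}, where the sum runs over a set of representatives g of the conjugacy classes of G. -/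
/-!
Sort the orbits of commuting `(m+1)`-tuples by the conjugacy class of their first entry. Every
orbit over the class of `g` contains a tuple `(g, y)`, whose tail `y` is a commuting tuple in
`Z_G(g)`, and a conjugator carrying `(g, y)` to `(g, y')` fixes `g`, hence lies in `Z_G(g)`. So
the orbits over the class of `g` are exactly the `Z_G(g)`-orbits of commuting `m`-tuples in
`Z_G(g)`.
-/

open MulAction ConjAct

namespace commTuples

variable {G : Type*} [Group G] {m : ℕ}

@[simp]
lemma smul_apply {n : ℕ} (k : ConjAct G) (x : commTuples G n) (i : Fin n) :
    ((k • x : commTuples G n) : Fin n → G) i =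
      ofConjAct k * (x : Fin n → G) i * (ofConjAct k)⁻¹ :=
  rfl

def headClass : Quotient (orbitRel (ConjAct G) (commTuples G (m + 1))) → ConjClasses G :=
  Quotient.lift (fun x => ConjClasses.mk ((x : Fin (m + 1) → G) 0)) <| by
    rintro _ x ⟨k, rfl⟩
    exact (ConjClasses.mk_eq_mk_iff_isConj.2 (isConj_iff.2 ⟨ofConjAct k, rfl⟩)).symm

variable (g : G)

def cons (y : commTuples (Subgroup.centralizer {g}) m) : commTuples G (m + 1) :=
  ⟨Fin.cons g fun i => (y : Fin m → Subgroup.centralizer {g}) i, by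
    have hg (z : Subgroup.centralizer {g}) : Commute g z :=
      (Subgroup.mem_centralizer_singleton_iff.1 z.2).symm
    refine Fin.cases (Fin.cases (Commute.refl g) fun j => hg _) fun i => Fin.cases (hg _).symm ?_
    exact fun j => (y.2 i j).map (Subgroup.subtype _)⟩

@[simp]
lemma cons_apply_zero (y : commTuples (Subgroup.centralizer {g}) m) :
    ((cons g y : commTuples G (m + 1)) : Fin (m + 1) → G) 0 = g :=
  rfl

@[simp]
lemma cons_apply_succ (y : commTuples (Subgroup.centralizer {g}) m) (i : Fin m) :
    ((cons g y : commTuples G (m + 1)) : Fin (m + 1) → G) i.succ =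
      (y : Fin m → Subgroup.centralizer {g}) i :=
  rfl

lemma cons_injective : Function.Injective (cons g (m := m)) := by
  intro y₁ y₂ h
  ext i
  simpa using congrFun (congrArg Subtype.val h) i.succ

lemma cons_smul (z : ConjAct (Subgroup.centralizer {g}))
    (y : commTuples (Subgroup.centralizer {g}) m) :
    cons g (z • y) = toConjAct ((ofConjAct z : Subgroup.centralizer {g}) : G) • cons g y := by
  ext i
  refine Fin.cases ?_ (fun i => ?_) i
  · simp [Subgroup.mem_centralizer_singleton_iff.1 (ofConjAct z).2]
  · simp

lemma exists_cons_eq {x : commTuples G (m + 1)} (hx : (x : Fin (m + 1) → G) 0 = g) :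
    ∃ y, cons g y = x := by
  have hmem (i : Fin m) : (x : Fin (m + 1) → G) i.succ ∈ Subgroup.centralizer {g} :=
    Subgroup.mem_centralizer_singleton_iff.2 (hx ▸ x.2 i.succ 0)
  refine ⟨⟨fun i => ⟨_, hmem i⟩, fun i j => Subtype.ext (x.2 i.succ j.succ)⟩, ?_⟩
  ext i
  exact Fin.cases hx.symm (fun _ => rfl) i

def orbitCons :
    Quotient (orbitRel (ConjAct (Subgroup.centralizer {g}))
        (commTuples (Subgroup.centralizer {g}) m)) →
      {q : Quotient (orbitRel (ConjAct G) (commTuples G (m + 1))) //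
        headClass q = ConjClasses.mk g} :=
  Quotient.lift (fun y => ⟨Quotient.mk _ (cons g y), rfl⟩) <| by
    rintro _ y ⟨z, rfl⟩
    exact Subtype.ext (Quotient.sound ⟨_, (cons_smul g z y).symm⟩)

lemma orbitCons_injective : Function.Injective (orbitCons g (m := m)) := by
  rintro ⟨y₁⟩ ⟨y₂⟩ h
  obtain ⟨k, hk⟩ := Quotient.exact (congrArg Subtype.val h)
  have hk_mem : ofConjAct k ∈ Subgroup.centralizer {g} := by
    have hk_zero := congrFun (congrArg Subtype.val hk) 0
    simp only [smul_apply, cons_apply_zero] at hk_zero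
    exact Subgroup.mem_centralizer_singleton_iff.2 (by rw [← mul_inv_eq_iff_eq_mul, hk_zero])
  refine Quotient.sound ⟨toConjAct ⟨_, hk_mem⟩, cons_injective g ?_⟩
  rw [cons_smul]
  exact hk

lemma orbitCons_surjective : Function.Surjective (orbitCons g (m := m)) := by
  rintro ⟨⟨x⟩, hx⟩
  obtain ⟨c, hc⟩ := isConj_iff.1 (ConjClasses.mk_eq_mk_iff_isConj.1 hx)
  obtain ⟨y, hy⟩ := exists_cons_eq g (x := toConjAct c • x) (by simpa using hc)
  exact ⟨Quotient.mk _ y, Subtype.ext (Quotient.sound ⟨toConjAct c, hy.symm⟩)⟩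

lemma card_headClass_fiber :
    Nat.card {q : Quotient (orbitRel (ConjAct G) (commTuples G (m + 1))) //
      headClass q = ConjClasses.mk g} = betaOrbits (Subgroup.centralizer {g}) m :=
  (Nat.card_eq_of_bijective _ ⟨orbitCons_injective g, orbitCons_surjective g⟩).symm

end commTuples

/-- Recursion for the number of orbits of commuting tuples: for `n ≥ 1`,
`β_{G,n} = ∑ β_{Z_G(g), n-1}`, the sum over a set of representatives of the
conjugacy classes of `G`. -/
theorem commuting_orbit_count_recursion (G : Type*) [Group G] [Fintype G]
    (n : ℕ) (hn : 1 ≤ n) (r : ConjClasses G → G)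
    (hr : ∀ c : ConjClasses G, ConjClasses.mk (r c) = c) :
    betaOrbits G n =
      ∑ᶠ c : ConjClasses G, betaOrbits (Subgroup.centralizer ({r c} : Set G)) (n - 1) := by
  obtain ⟨m, rfl⟩ := Nat.exists_eq_add_of_le' hn
  have := Fintype.ofFinite (ConjClasses G)
  rw [Nat.add_sub_cancel, finsum_eq_sum_of_fintype, betaOrbits,
    ← Nat.card_congr (Equiv.sigmaFiberEquiv commTuples.headClass), Nat.card_sigma]
  exact Finset.sum_congr rfl fun c _ => by rw [← commTuples.card_headClass_fiber, hr]
end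

section
/- For a finite group G, the exponential growth rate of the number β_{G,n} of simultaneous conjugacy classes of commuting n-tuples equals the maximal cardinality of an abelian subgroup of G: lim_{n→∞} β_{G,n}^{1/n} = max{|A| : A ≤ G abelian}. -/
open Finset in
lemma aux_card_le_mul {α β : Type*} [Finite α] [Finite β] (f : α → β) (k : ℕ)
    (h : ∀ b : β, Nat.card {a : α // f a = b} ≤ k) : Nat.card α ≤ k * Nat.card β := by
  classical
  cases nonempty_fintype α
  cases nonempty_fintype β
  rw [Nat.card_eq_fintype_card, Nat.card_eq_fintype_card]
  have H := Finset.card_le_mul_card_image (f := f) Finset.univ k ?_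
  · calc Fintype.card α = Finset.univ.card := rfl
      _ ≤ k * (Finset.univ.image f).card := by simpa using H
      _ ≤ k * Fintype.card β := Nat.mul_le_mul_left k (Finset.card_le_univ _)
  · intro b _
    have : (Finset.univ.filter (fun a => f a = b)).card = Nat.card {a : α // f a = b} := by
      rw [Nat.card_eq_fintype_card, Fintype.card_subtype]
    rw [this]; exact h b

lemma aux_closure_comm {G : Type*} [Group G] (s : Set G)
    (hs : ∀ x ∈ s, ∀ y ∈ s, x * y = y * x) :
    ∀ x ∈ Subgroup.closure s, ∀ y ∈ Subgroup.closure s, x * y = y * x := by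
  have h1 : Subgroup.closure s ≤ Subgroup.centralizer s := by
    rw [Subgroup.closure_le]
    intro x hx
    rw [SetLike.mem_coe, Subgroup.mem_centralizer_iff]
    intro y hy
    exact hs y hy x hx
  have h2 : Subgroup.closure s ≤ Subgroup.centralizer (Subgroup.closure s : Set G) := by
    rw [Subgroup.closure_le]
    intro x hx
    rw [SetLike.mem_coe, Subgroup.mem_centralizer_iff]
    intro y hy
    exact (h1 hy x hx).symm
  intro x hx y hy
  exact Subgroup.mem_centralizer_iff.mp (h2 hy) x hx
lemma aux_lower {G : Type*} [Group G] [Fintype G] (A : Subgroup G)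
    (hA : ∀ x ∈ A, ∀ y ∈ A, x * y = y * x) (n : ℕ) :
    Nat.card A ^ n ≤ Nat.card G * betaOrbits G n := by
  classical
  set Q := Quotient (MulAction.orbitRel (ConjAct G) (commTuples G n)) with hQ
  have hmem : ∀ x : Fin n → A, (fun i => (x i : G)) ∈ commTuples G n := by
    intro x i j
    exact hA _ (x i).2 _ (x j).2
  set φ : (Fin n → A) → Q := fun x => Quotient.mk _ (⟨fun i => (x i : G), hmem x⟩ : commTuples G n)
  have hcard : Nat.card (Fin n → A) = Nat.card A ^ n := by
    simp [Nat.card_pi]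
  rw [← hcard]
  refine aux_card_le_mul φ (Nat.card G) ?_
  intro q
  by_cases hne : Nonempty {x : Fin n → A // φ x = q}
  · obtain ⟨⟨x₀, hx₀⟩⟩ := hne
    set t₀ : commTuples G n := ⟨fun i => (x₀ i : G), hmem x₀⟩
    have key : ∀ x : {x : Fin n → A // φ x = q},
        (⟨fun i => ((x : Fin n → A) i : G), hmem x⟩ : commTuples G n) ∈
          MulAction.orbit (ConjAct G) t₀ := by
      rintro ⟨x, hx⟩
      have : φ x = φ x₀ := hx.trans hx₀.symm
      exact Quotient.exact this
    have hinj : Function.Injective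
        (fun x : {x : Fin n → A // φ x = q} =>
          (⟨⟨fun i => ((x : Fin n → A) i : G), hmem x⟩, key x⟩ :
            MulAction.orbit (ConjAct G) t₀)) := by
      rintro ⟨x, hx⟩ ⟨y, hy⟩ h
      simp only [Subtype.mk.injEq, SetLike.coe_eq_coe] at h
      ext i
      exact congrFun h i
    calc Nat.card {x : Fin n → A // φ x = q}
        ≤ Nat.card (MulAction.orbit (ConjAct G) t₀) := Nat.card_le_card_of_injective _ hinj
      _ ≤ Nat.card (ConjAct G) := by
          refine Nat.card_le_card_of_surjective
            (fun g : ConjAct G => ⟨g • t₀, MulAction.mem_orbit _ _⟩) ?_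
          rintro ⟨y, g, rfl⟩
          exact ⟨g, rfl⟩
      _ = Nat.card G := rfl
  · have : IsEmpty {x : Fin n → A // φ x = q} := not_nonempty_iff.mp hne
    simp [Nat.card_of_isEmpty]

lemma aux_upper {G : Type*} [Group G] [Fintype G] (a : ℕ)
    (ha : ∀ A : Subgroup G, (∀ x ∈ A, ∀ y ∈ A, x * y = y * x) → Nat.card A ≤ a) (n : ℕ) :
    betaOrbits G n ≤
      Nat.card {A : Subgroup G // ∀ x ∈ A, ∀ y ∈ A, x * y = y * x} * a ^ n := by
  classical
  set T := {A : Subgroup G // ∀ x ∈ A, ∀ y ∈ A, x * y = y * x} with hT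
  set Φ : (Σ A : T, (Fin n → ((A : Subgroup G) : Type _))) → commTuples G n :=
    fun p => ⟨fun i => ((p.2 i : G)), fun i j => p.1.2 _ (p.2 i).2 _ (p.2 j).2⟩ with hΦ
  have hsurj : Function.Surjective Φ := by
    rintro ⟨t, ht⟩
    have hcomm : ∀ x ∈ Subgroup.closure (Set.range t), ∀ y ∈ Subgroup.closure (Set.range t),
        x * y = y * x := by
      refine aux_closure_comm _ ?_
      rintro x ⟨i, rfl⟩ y ⟨j, rfl⟩
      exact ht i j
    refine ⟨⟨⟨Subgroup.closure (Set.range t), hcomm⟩,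
      fun i => ⟨t i, Subgroup.subset_closure ⟨i, rfl⟩⟩⟩, rfl⟩
  have h1 : betaOrbits G n ≤ Nat.card (commTuples G n) :=
    Nat.card_le_card_of_surjective _ (Quot.exists_rep)
  have h2 : Nat.card (commTuples G n) ≤
      Nat.card (Σ A : T, (Fin n → ((A : Subgroup G) : Type _))) :=
    Nat.card_le_card_of_surjective Φ hsurj
  refine h1.trans (h2.trans ?_)
  letI : Fintype T := Fintype.ofFinite T
  rw [Nat.card_eq_fintype_card, Fintype.card_sigma]
  calc ∑ A : T, Fintype.card (Fin n → ((A : Subgroup G) : Type _))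
      ≤ ∑ _A : T, a ^ n := by
        refine Finset.sum_le_sum ?_
        intro A _
        rw [Fintype.card_fun]
        have : Fintype.card ((A : Subgroup G) : Type _) ≤ a := by
          rw [← Nat.card_eq_fintype_card]; exact ha A.1 A.2
        simpa using Nat.pow_le_pow_left this _
    _ = Nat.card T * a ^ n := by
        rw [Finset.sum_const, Finset.card_univ, Nat.card_eq_fintype_card, smul_eq_mul]

lemma aux_rpow_tendsto_one {c : ℝ} (hc : 0 < c) :
    Filter.Tendsto (fun n : ℕ => c ^ ((1:ℝ)/n)) Filter.atTop (nhds 1) := by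
  have h0 : Filter.Tendsto (fun n : ℕ => (1:ℝ)/n) Filter.atTop (nhds 0) :=
    tendsto_one_div_atTop_nhds_zero_nat
  have := (Real.continuousAt_const_rpow (b := (0:ℝ)) hc.ne').tendsto.comp h0
  simpa [Real.rpow_zero, Function.comp_def] using this

/-- The exponential growth rate of the number of simultaneous conjugacy classes of
commuting `n`-tuples equals the maximal cardinality of an abelian subgroup. -/
theorem beta_growth_rate (G : Type*) [Group G] [Fintype G] :
    Filter.Tendsto
      (fun n : ℕ => (betaOrbits G n : ℝ) ^ ((1 : ℝ) / n))
      Filter.atTop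
      (nhds ((sSup {k : ℕ | ∃ A : Subgroup G,
        (∀ x ∈ A, ∀ y ∈ A, x * y = y * x) ∧ Nat.card A = k} : ℕ) : ℝ)) := by
  classical
  set S : Set ℕ := {k : ℕ | ∃ A : Subgroup G,
    (∀ x ∈ A, ∀ y ∈ A, x * y = y * x) ∧ Nat.card A = k} with hS
  have h1S : (1 : ℕ) ∈ S := ⟨⊥, by simp [Subgroup.mem_bot], by simp⟩
  have hbdd : BddAbove S := by
    refine ⟨Nat.card G, ?_⟩
    rintro k ⟨A, -, rfl⟩
    exact Nat.card_le_card_of_injective _ A.subtype_injective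
  set a : ℕ := sSup S with ha
  have ha1 : 1 ≤ a := le_csSup hbdd h1S
  have hub : ∀ A : Subgroup G, (∀ x ∈ A, ∀ y ∈ A, x * y = y * x) → Nat.card A ≤ a :=
    fun A hA => le_csSup hbdd ⟨A, hA, rfl⟩
  set b : ℕ := Nat.card {A : Subgroup G // ∀ x ∈ A, ∀ y ∈ A, x * y = y * x} with hb
  have hb1 : 0 < b := by
    haveI : Nonempty {A : Subgroup G // ∀ x ∈ A, ∀ y ∈ A, x * y = y * x} :=
      ⟨⟨⊥, by simp [Subgroup.mem_bot]⟩⟩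
    exact Nat.card_pos
  have hg1 : 0 < Nat.card G := Nat.card_pos
  -- the maximal abelian subgroup
  obtain ⟨A₀, hA₀comm, hA₀card⟩ : a ∈ S := Nat.sSup_mem ⟨1, h1S⟩ hbdd
  -- squeeze
  have hfa : Filter.Tendsto (fun n : ℕ => (a:ℝ) * ((Nat.card G : ℝ)⁻¹) ^ ((1:ℝ)/n))
      Filter.atTop (nhds a) := by
    have := (aux_rpow_tendsto_one (c := ((Nat.card G : ℝ))⁻¹) (by positivity)).const_mul (a:ℝ)
    simpa using this
  have hha : Filter.Tendsto (fun n : ℕ => (a:ℝ) * ((b : ℝ)) ^ ((1:ℝ)/n))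
      Filter.atTop (nhds a) := by
    have := (aux_rpow_tendsto_one (c := (b:ℝ)) (by positivity)).const_mul (a:ℝ)
    simpa using this
  refine tendsto_of_tendsto_of_tendsto_of_le_of_le' hfa hha ?_ ?_
  · -- lower bound
    filter_upwards [Filter.eventually_ge_atTop 1] with n hn
    have hn0 : (n:ℝ) ≠ 0 := by
      exact_mod_cast Nat.one_le_iff_ne_zero.mp hn
    have hnat : a ^ n ≤ Nat.card G * betaOrbits G n := by
      rw [← hA₀card]; exact aux_lower A₀ hA₀comm n
    have hle : (a:ℝ)^(n:ℕ) * ((Nat.card G : ℝ))⁻¹ ≤ (betaOrbits G n : ℝ) := by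
      rw [mul_inv_le_iff₀ (by positivity)]
      calc ((a:ℝ))^(n:ℕ) ≤ ((Nat.card G : ℝ)) * (betaOrbits G n : ℝ) := by exact_mod_cast hnat
        _ = (betaOrbits G n : ℝ) * (Nat.card G : ℝ) := mul_comm _ _
    calc (a:ℝ) * ((Nat.card G : ℝ)⁻¹) ^ ((1:ℝ)/n)
        = ((a:ℝ)^(n:ℕ) * ((Nat.card G : ℝ))⁻¹) ^ ((1:ℝ)/n) := by
          rw [Real.mul_rpow (by positivity) (by positivity)]
          congr 1
          rw [← Real.rpow_natCast (a:ℝ) n, ← Real.rpow_mul (by positivity),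
            mul_one_div, div_self hn0, Real.rpow_one]
      _ ≤ (betaOrbits G n : ℝ) ^ ((1:ℝ)/n) :=
          Real.rpow_le_rpow (by positivity) hle (by positivity)
  · -- upper bound
    filter_upwards [Filter.eventually_ge_atTop 1] with n hn
    have hn0 : (n:ℝ) ≠ 0 := by
      exact_mod_cast Nat.one_le_iff_ne_zero.mp hn
    have hle : (betaOrbits G n : ℝ) ≤ (b:ℝ) * ((a:ℝ))^(n:ℕ) := by
      exact_mod_cast aux_upper a hub n
    calc (betaOrbits G n : ℝ) ^ ((1:ℝ)/n)
        ≤ ((b:ℝ) * ((a:ℝ))^(n:ℕ)) ^ ((1:ℝ)/n) :=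
          Real.rpow_le_rpow (by positivity) hle (by positivity)
      _ = (a:ℝ) * ((b : ℝ)) ^ ((1:ℝ)/n) := by
          rw [Real.mul_rpow (by positivity) (by positivity)]
          rw [← Real.rpow_natCast (a:ℝ) n, ← Real.rpow_mul (by positivity),
            mul_one_div, div_self hn0, Real.rpow_one, mul_comm]
end

section
/- Let G be a Frobenius group with Frobenius kernel N and complement H, and suppose both N and H are abelian. Then the number α_{G,n} of simultaneous conjugacy classes of n-tuples in G satisfies |G|·α_{G,n} = |G|^n + (|N|−1)|N|^n + |N|(|H|−1)|H|^n for all n ≥ 1. -/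
section Aux

lemma fixedBy_conj_eq (G : Type*) [Group G] (c : G) :
    (MulAction.fixedBy G (ConjAct.toConjAct c) : Set G) = Subgroup.centralizer {c} := by
  ext a
  simp only [MulAction.mem_fixedBy, ConjAct.smul_def, ConjAct.ofConjAct_toConjAct,
    SetLike.mem_coe, Subgroup.mem_centralizer_iff, Set.mem_singleton_iff, forall_eq,
    mul_inv_eq_iff_eq_mul]

lemma burnside_conj (G : Type*) [Group G] [Fintype G] (n : ℕ) :
    Nat.card G * alphaOrbits G n = ∑ c : G, Nat.card (Subgroup.centralizer {c}) ^ n := by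
  classical
  letI : Fintype (Quotient (MulAction.orbitRel (ConjAct G) (Fin n → G))) := Fintype.ofFinite _
  letI : ∀ a : ConjAct G, Fintype (MulAction.fixedBy (Fin n → G) a) :=
    fun a => Fintype.ofFinite _
  have hb := MulAction.sum_card_fixedBy_eq_card_orbits_mul_card_group (ConjAct G) (Fin n → G)
  have e : ∀ a : ConjAct G,
      (MulAction.fixedBy (Fin n → G) a) ≃ (Fin n → MulAction.fixedBy G a) := fun a =>
    { toFun := fun x i => ⟨x.1 i, by
        have h := congrFun x.2 i
        simpa [MulAction.mem_fixedBy] using h⟩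
      invFun := fun f => ⟨fun i => (f i).1, by
        funext i
        exact (f i).2⟩
      left_inv := fun x => Subtype.ext rfl
      right_inv := fun f => rfl }
  have hcard : ∀ a : ConjAct G,
      Fintype.card (MulAction.fixedBy (Fin n → G) a)
        = Nat.card (Subgroup.centralizer {ConjAct.ofConjAct a}) ^ n := by
    intro a
    rw [Fintype.card_congr (e a), Fintype.card_fun]
    rw [Fintype.card_fin]
    congr 1
    have : (MulAction.fixedBy G a : Set G)
        = (Subgroup.centralizer {ConjAct.ofConjAct a} : Set G) := by
      rw [← fixedBy_conj_eq G (ConjAct.ofConjAct a), ConjAct.toConjAct_ofConjAct]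
    rw [← Nat.card_eq_fintype_card]
    exact Nat.card_congr (Equiv.setCongr this)
  rw [Finset.sum_congr rfl (fun a _ => hcard a)] at hb
  have hre : ∑ a : ConjAct G, Nat.card (Subgroup.centralizer {ConjAct.ofConjAct a}) ^ n
      = ∑ c : G, Nat.card (Subgroup.centralizer {c}) ^ n := by
    exact Fintype.sum_equiv ConjAct.ofConjAct.toEquiv _ _ (fun a => rfl)
  rw [← hre, hb, alphaOrbits, Nat.card_eq_fintype_card, Nat.card_eq_fintype_card, mul_comm]
  congr 1

variable {G : Type*} [Group G] (H : Subgroup G)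

lemma memconj (g x : G) : x ∈ H.map (MulAut.conj g).toMonoidHom ↔ g⁻¹ * x * g ∈ H := by
  rw [Subgroup.mem_map_equiv]
  simp [mul_assoc]

variable (hfrob : ∀ g : G, g ∉ H → H ⊓ H.map (MulAut.conj g).toMonoidHom = ⊥)

include hfrob in
/-- Malnormality: any element commuting with a nontrivial element of a conjugate of `H`
lies in that conjugate. -/
lemma malnormal (g x y : G) (hx : x ∈ H.map (MulAut.conj g).toMonoidHom) (hx1 : x ≠ 1)
    (hcomm : y * x = x * y) : y ∈ H.map (MulAut.conj g).toMonoidHom := by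
  rw [memconj] at hx ⊢
  by_contra hy
  have hk : g⁻¹ * x * g ∈ H ⊓ H.map (MulAut.conj (g⁻¹ * y * g)).toMonoidHom := by
    refine Subgroup.mem_inf.mpr ⟨hx, ?_⟩
    rw [memconj]
    have hyxy : y⁻¹ * x * y = x := by
      rw [mul_assoc, ← hcomm, ← mul_assoc, inv_mul_cancel, one_mul]
    have : (g⁻¹ * y * g)⁻¹ * (g⁻¹ * x * g) * (g⁻¹ * y * g) = g⁻¹ * (y⁻¹ * x * y) * g := by
      group
    rw [this, hyxy]
    exact hx
  rw [hfrob _ hy] at hk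
  have : g⁻¹ * x * g = 1 := Subgroup.mem_bot.mp hk
  apply hx1
  have := congrArg (fun z => g * z * g⁻¹) this
  simpa [mul_assoc] using this

include hfrob in
lemma card_union_conj [Fintype G]
    (hHab : ∀ x ∈ H, ∀ y ∈ H, x * y = y * x) :
    Nat.card ↥((⋃ g : G, (H.map (MulAut.conj g).toMonoidHom : Set G)) \ {1})
      = H.index * (Nat.card H - 1) := by
  classical
  set U : Set G := ⋃ g : G, (H.map (MulAut.conj g).toMonoidHom : Set G) with hUdef
  have hmem : ∀ (g : G) (h : {h : H // (h : G) ≠ 1}), g * h * g⁻¹ ∈ U \ {1} := by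
    intro g h
    constructor
    · refine Set.mem_iUnion.mpr ⟨g, ?_⟩
      rw [SetLike.mem_coe, memconj]
      have : g⁻¹ * (g * ↑↑h * g⁻¹) * g = (h : G) := by group
      rw [this]
      exact h.1.2
    · intro hx
      apply h.2
      have h1 : g * (h : G) * g⁻¹ = 1 := hx
      have := congrArg (fun z => g⁻¹ * z * g) h1
      simpa [mul_assoc] using this
  let Φ : (G ⧸ H) × {h : H // (h : G) ≠ 1} → ↥(U \ {1}) := fun p =>
    Quotient.liftOn' p.1 (fun g => (⟨g * p.2 * g⁻¹, hmem g p.2⟩ : ↥(U \ {1})))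
      (by
        intro a b hab
        have hab' : a⁻¹ * b ∈ H := QuotientGroup.leftRel_apply.mp hab
        apply Subtype.ext
        show a * (p.2 : G) * a⁻¹ = b * (p.2 : G) * b⁻¹
        have hcomm := hHab _ hab' _ p.2.1.2
        have h2 : (a⁻¹ * b) * (p.2 : G) * (a⁻¹ * b)⁻¹ = (p.2 : G) := by
          rw [hcomm]; group
        calc a * (p.2 : G) * a⁻¹
            = a * ((a⁻¹ * b) * (p.2 : G) * (a⁻¹ * b)⁻¹) * a⁻¹ := by rw [h2]
          _ = b * (p.2 : G) * b⁻¹ := by group)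
  have hbij : Function.Bijective Φ := by
    constructor
    · rintro ⟨x1, h1⟩ ⟨x2, h2⟩
      induction x1, x2 using Quotient.inductionOn₂' with
      | h g1 g2 =>
        intro heq
        have heq' : g1 * (h1 : G) * g1⁻¹ = g2 * (h2 : G) * g2⁻¹ := congrArg Subtype.val heq
        have hk : g1⁻¹ * g2 ∈ H := by
          by_contra hknot
          have hmem1 : (h1 : G) ∈ H ⊓ H.map (MulAut.conj (g1⁻¹ * g2)).toMonoidHom := by
            refine Subgroup.mem_inf.mpr ⟨h1.1.2, ?_⟩
            rw [memconj]
            have e1 : (g1⁻¹ * g2)⁻¹ * (h1 : G) * (g1⁻¹ * g2)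
                = g2⁻¹ * (g1 * (h1 : G) * g1⁻¹) * g2 := by group
            rw [e1, heq']
            have e2 : g2⁻¹ * (g2 * (h2 : G) * g2⁻¹) * g2 = (h2 : G) := by group
            rw [e2]
            exact h2.1.2
          rw [hfrob _ hknot] at hmem1
          exact h1.2 (Subgroup.mem_bot.mp hmem1)
        have hq : (Quotient.mk'' g1 : G ⧸ H) = Quotient.mk'' g2 :=
          Quotient.sound' (QuotientGroup.leftRel_apply.mpr hk)
        have hh : (h1 : G) = (h2 : G) := by
          have hcomm := hHab _ hk _ h2.1.2
          have e3 : (h1 : G) = (g1⁻¹ * g2) * (h2 : G) * (g1⁻¹ * g2)⁻¹ := by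
            have := congrArg (fun z => g1⁻¹ * z * g1) heq'
            simpa [mul_assoc] using this
          rw [e3, hcomm]
          group
        exact Prod.ext hq (Subtype.ext (Subtype.ext hh))
    · rintro ⟨x, hxU, hx1⟩
      simp only [Set.mem_singleton_iff] at hx1
      obtain ⟨g, hg⟩ := Set.mem_iUnion.mp hxU
      rw [SetLike.mem_coe, memconj] at hg
      have hcne : ((⟨g⁻¹ * x * g, hg⟩ : H) : G) ≠ 1 := by
        intro hc
        apply hx1
        have := congrArg (fun z => g * z * g⁻¹) (hc : g⁻¹ * x * g = 1)
        simpa [mul_assoc] using this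
      refine ⟨(Quotient.mk'' g, ⟨⟨g⁻¹ * x * g, hg⟩, hcne⟩), ?_⟩
      apply Subtype.ext
      show g * (g⁻¹ * x * g) * g⁻¹ = x
      group
  have hc1 : Nat.card ↥(U \ {1}) = Nat.card ((G ⧸ H) × {h : H // (h : G) ≠ 1}) :=
    (Nat.card_congr (Equiv.ofBijective Φ hbij)).symm
  rw [hc1, Nat.card_prod]
  congr 1
  letI : Fintype H := Fintype.ofFinite H
  have e2 : Nat.card {h : H // (h : G) ≠ 1} = Nat.card {h : H // h ≠ 1} := by
    apply Nat.card_congr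
    apply Equiv.subtypeEquivRight
    intro h
    simp
  rw [e2, Nat.card_eq_fintype_card, Nat.card_eq_fintype_card]
  have e3 : Fintype.card {h : H // ¬ (h = 1)} = Fintype.card H - Fintype.card {h : H // h = 1} :=
    Fintype.card_subtype_compl _
  rw [e3, Fintype.card_subtype_eq]

end Aux

/-- For a Frobenius group `G` with abelian kernel `N` and abelian complement `H`:
`|G|·α_{G,n} = |G|^n + (|N|-1)|N|^n + |N|(|H|-1)|H|^n`. -/
theorem frobenius_abelian_alpha (G : Type*) [Group G] [Fintype G] (H N : Subgroup G)
    (hHbot : H ≠ ⊥) (hHtop : H ≠ ⊤)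
    (hfrob : ∀ g : G, g ∉ H → H ⊓ H.map (MulAut.conj g).toMonoidHom = ⊥)
    (hN : (N : Set G) =
      (Set.univ \ ⋃ g : G, (H.map (MulAut.conj g).toMonoidHom : Set G)) ∪ {1})
    (hNab : ∀ x ∈ N, ∀ y ∈ N, x * y = y * x)
    (hHab : ∀ x ∈ H, ∀ y ∈ H, x * y = y * x)
    (n : ℕ) (hn : 1 ≤ n) :
    Nat.card G * alphaOrbits G n =
      Nat.card G ^ n + (Nat.card N - 1) * Nat.card N ^ n +
        Nat.card N * (Nat.card H - 1) * Nat.card H ^ n := by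
  classical
  set U : Set G := ⋃ g : G, (H.map (MulAut.conj g).toMonoidHom : Set G) with hUdef
  -- basic facts about membership
  have hNU : ∀ x : G, x ∈ N → x ∈ U → x = 1 := by
    intro x hxN hxU
    have := hN ▸ (SetLike.mem_coe.mpr hxN : x ∈ (N : Set G))
    rcases this with h | h
    · exact absurd hxU h.2
    · exact h
  have hnotN : ∀ x : G, x ∉ N → x ∈ U ∧ x ≠ 1 := by
    intro x hxN
    by_contra hc
    push_neg at hc
    apply hxN
    have : x ∈ (N : Set G) := by
      rw [hN]
      by_cases hx1 : x = 1
      · exact Or.inr hx1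
      · exact Or.inl ⟨trivial, fun hU => hx1 (hc hU)⟩
    exact this
  -- centralizer of a nontrivial element of N is N
  have hcentN : ∀ c : G, c ∈ N → c ≠ 1 → Subgroup.centralizer {c} = N := by
    intro c hcN hc1
    ext y
    rw [Subgroup.mem_centralizer_iff]
    simp only [Set.mem_singleton_iff, forall_eq]
    constructor
    · intro hy
      by_contra hyN
      obtain ⟨hyU, hy1⟩ := hnotN y hyN
      obtain ⟨g, hg⟩ := Set.mem_iUnion.mp hyU
      rw [SetLike.mem_coe] at hg
      have hcU : c ∈ H.map (MulAut.conj g).toMonoidHom :=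
        malnormal H hfrob g y c hg hy1 hy
      have : c ∈ U := Set.mem_iUnion.mpr ⟨g, hcU⟩
      exact hc1 (hNU c hcN this)
    · intro hyN
      exact hNab c hcN y hyN
  -- centralizer of a nontrivial element of U has cardinality |H|
  have hcentU : ∀ c : G, c ∈ U → c ≠ 1 → Nat.card (Subgroup.centralizer {c}) = Nat.card H := by
    intro c hcU hc1
    obtain ⟨g, hg⟩ := Set.mem_iUnion.mp hcU
    rw [SetLike.mem_coe] at hg
    have hcent : Subgroup.centralizer {c} = H.map (MulAut.conj g).toMonoidHom := by
      ext y
      rw [Subgroup.mem_centralizer_iff]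
      simp only [Set.mem_singleton_iff, forall_eq]
      constructor
      · intro hy
        exact malnormal H hfrob g c y hg hc1 hy.symm
      · intro hy
        rw [memconj] at hy hg
        have := congrArg (fun z => g * z * g⁻¹) (hHab _ hg _ hy)
        simpa [mul_assoc] using this
    rw [hcent]
    have : H.map (MulAut.conj g).toMonoidHom ≃* H :=
      (H.equivMapOfInjective _ (MulAut.conj g).injective).symm
    exact Nat.card_congr this.toEquiv
  -- partition of G into U \ {1} and N
  have hpart : (U \ {1}) ∪ (N : Set G) = Set.univ := by
    ext x
    simp only [Set.mem_union, Set.mem_diff, Set.mem_singleton_iff, Set.mem_univ, iff_true]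
    by_cases hxN : x ∈ N
    · exact Or.inr hxN
    · obtain ⟨hU, h1⟩ := hnotN x hxN
      exact Or.inl ⟨hU, h1⟩
  have hdisj : Disjoint (U \ {1}) (N : Set G) := by
    rw [Set.disjoint_left]
    rintro x ⟨hxU, hx1⟩ hxN
    exact hx1 (hNU x hxN hxU)
  have hcardsum : Nat.card ↥(U \ {1}) + Nat.card N = Nat.card G := by
    rw [Nat.card_coe_set_eq]
    have hN' : Nat.card N = (N : Set G).ncard := by
      rw [← Nat.card_coe_set_eq]; rfl
    rw [hN', ← Set.ncard_union_eq hdisj (Set.toFinite _) (Set.toFinite _), hpart, Set.ncard_univ]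
  have hUcard : Nat.card ↥(U \ {1}) = H.index * (Nat.card H - 1) :=
    card_union_conj H hfrob hHab
  have hmpos : 0 < Nat.card H := Nat.card_pos
  have hindex : H.index * Nat.card H = Nat.card G := H.index_mul_card
  have h2 : H.index * (Nat.card H - 1) + H.index = H.index * Nat.card H := by
    rw [← Nat.mul_succ, Nat.sub_one, Nat.succ_pred_eq_of_pos hmpos]
  have hNcard : Nat.card N = H.index := by omega
  have hUNcard : Nat.card ↥(U \ {1}) = Nat.card N * (Nat.card H - 1) := by
    rw [hUcard, hNcard]
  -- Burnside and splitting the sum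
  rw [burnside_conj G n]
  set F : G → ℕ := fun c => Nat.card (Subgroup.centralizer {c}) ^ n with hF
  set A : Finset G := Finset.univ.filter (fun c : G => c ∈ N) with hA
  set B : Finset G := Finset.univ.filter (fun c : G => ¬ c ∈ N) with hB
  have hsplit : ∑ c : G, F c = (∑ c ∈ A, F c) + (∑ c ∈ B, F c) :=
    (Finset.sum_filter_add_sum_filter_not Finset.univ _ F).symm
  have hAcard : A.card = Nat.card N := by
    rw [hA, Nat.card_eq_fintype_card]
    exact (Fintype.card_subtype _).symm
  have hABcard : A.card + B.card = Nat.card G := by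
    rw [hA, hB, Nat.card_eq_fintype_card, ← Finset.card_univ]
    exact Finset.card_filter_add_card_filter_not _
  -- split A into {1} and the rest
  have hA1 : A.filter (fun c => c = 1) = {1} := by
    ext c
    simp only [Finset.mem_filter, Finset.mem_singleton, hA, Finset.mem_univ, true_and]
    constructor
    · rintro ⟨_, h⟩; exact h
    · rintro rfl; exact ⟨N.one_mem, rfl⟩
  have hAsplit : ∑ c ∈ A, F c
      = (∑ c ∈ A.filter (fun c => c = 1), F c) + (∑ c ∈ A.filter (fun c => ¬ c = 1), F c) :=
    (Finset.sum_filter_add_sum_filter_not A _ F).symm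
  have hF1 : F 1 = Nat.card G ^ n := by
    have hc : Subgroup.centralizer {(1 : G)} = ⊤ := by
      ext x
      simp [Subgroup.mem_centralizer_iff]
    rw [hF]
    simp only [hc, Subgroup.card_top]
  have hsum1 : ∑ c ∈ A.filter (fun c => c = 1), F c = Nat.card G ^ n := by
    rw [hA1, Finset.sum_singleton, hF1]
  have hsum2 : ∑ c ∈ A.filter (fun c => ¬ c = 1), F c = (Nat.card N - 1) * Nat.card N ^ n := by
    have hterm : ∀ c ∈ A.filter (fun c => ¬ c = 1), F c = Nat.card N ^ n := by
      intro c hc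
      simp only [Finset.mem_filter, hA, Finset.mem_univ, true_and] at hc
      rw [hF]
      simp only
      rw [hcentN c hc.1 hc.2]
    rw [Finset.sum_congr rfl hterm, Finset.sum_const, smul_eq_mul]
    congr 1
    have := Finset.card_filter_add_card_filter_not (s := A) (p := fun c => c = 1)
    rw [hA1] at this
    simp only [Finset.card_singleton] at this
    omega
  have hsum3 : ∑ c ∈ B, F c = Nat.card N * (Nat.card H - 1) * Nat.card H ^ n := by
    have hterm : ∀ c ∈ B, F c = Nat.card H ^ n := by
      intro c hc
      simp only [Finset.mem_filter, hB, Finset.mem_univ, true_and] at hc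
      obtain ⟨hcU, hc1⟩ := hnotN c hc
      rw [hF]
      simp only
      rw [hcentU c hcU hc1]
    rw [Finset.sum_congr rfl hterm, Finset.sum_const, smul_eq_mul]
    congr 1
    omega
  rw [hsplit, hAsplit, hsum1, hsum2, hsum3]
end

section
/- Let D_{2n} be the dihedral group of order 2n with n even. Then the number of simultaneous conjugacy classes of k-tuples is α_{D_{2n},k} = (1/2n)·(2·(2n)^k + n·4^k + (n−2)·n^k) for k ≥ 1. -/
open MulAction DihedralGroup

variable {n : ℕ}

def dihSplit (P : DihedralGroup n → Prop) :
    {j : ZMod n // P (r j)} ⊕ {j : ZMod n // P (sr j)} ≃ {h // P h} where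
  toFun x := match x with
    | Sum.inl ⟨j, h⟩ => ⟨r j, h⟩
    | Sum.inr ⟨j, h⟩ => ⟨sr j, h⟩
  invFun g := match g with
    | ⟨r j, h⟩ => Sum.inl ⟨j, h⟩
    | ⟨sr j, h⟩ => Sum.inr ⟨j, h⟩
  left_inv := by rintro (⟨j, h⟩ | ⟨j, h⟩) <;> rfl
  right_inv := by rintro ⟨(j | j), h⟩ <;> rfl

lemma card_split [NeZero n] (P : DihedralGroup n → Prop) :
    Nat.card {h // P h} =
      Nat.card {j : ZMod n // P (r j)} + Nat.card {j : ZMod n // P (sr j)} := by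
  rw [← Nat.card_sum]
  exact Nat.card_congr (dihSplit P).symm

lemma two_torsion_card (hn : Even n) (hn0 : 0 < n) :
    Nat.card {j : ZMod n // j + j = 0} = 2 := by
  haveI : NeZero n := ⟨hn0.ne'⟩
  obtain ⟨m, hm⟩ := hn
  have hm0 : 0 < m := by omega
  have key : ∀ j : ZMod n, j + j = 0 ↔ j = 0 ∨ j = ((m : ℕ) : ZMod n) := by
    intro j
    constructor
    · intro h
      have hv : ((j.val : ℕ) : ZMod n) = j := ZMod.natCast_rightInverse j
      have h2 : ((j.val + j.val : ℕ) : ZMod n) = 0 := by push_cast [hv]; exact h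
      have hdvd : n ∣ j.val + j.val := (ZMod.natCast_eq_zero_iff _ _).mp h2
      have hlt : j.val < n := ZMod.val_lt j
      obtain ⟨c, hc⟩ := hdvd
      have hc2 : c = 0 ∨ c = 1 := by
        by_contra hco
        have h2c : 2 ≤ c := by omega
        have := Nat.mul_le_mul_left n h2c
        omega
      rcases hc2 with rfl | rfl
      · left
        have h0 : j.val = 0 := by omega
        rw [← hv, h0]; simp
      · right
        have h0 : j.val = m := by omega
        rw [← hv, h0]
    · rintro (rfl | rfl)
      · simp
      · have : ((m : ℕ) : ZMod n) + ((m : ℕ) : ZMod n) = ((m + m : ℕ) : ZMod n) := by push_cast; ring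
        rw [this, ← hm, ZMod.natCast_self]
  have hne : ((m : ℕ) : ZMod n) ≠ 0 := by
    rw [Ne, ZMod.natCast_eq_zero_iff]
    intro hd
    have := Nat.le_of_dvd hm0 hd
    omega
  calc Nat.card {j : ZMod n // j + j = 0}
      = Nat.card ({0, ((m : ℕ) : ZMod n)} : Set (ZMod n)) :=
        Nat.card_congr (Equiv.subtypeEquivRight (by
          intro j; rw [key]; simp [Set.mem_insert_iff]))
    _ = 2 := by rw [Nat.card_coe_set_eq, Set.ncard_pair hne.symm]

lemma cnt_r [NeZero n] (i : ZMod n) :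
    Nat.card {h : DihedralGroup n // r i * h = h * r i} =
      n + (if i + i = 0 then n else 0) := by
  rw [card_split]
  congr 1
  · rw [Nat.card_congr (Equiv.subtypeUnivEquiv fun j => by
      rw [r_mul_r, r_mul_r, add_comm]), Nat.card_zmod]
  · have hiff : ∀ j : ZMod n, (r i * sr j = sr j * r i) ↔ i + i = 0 := fun j => by
      rw [r_mul_sr, sr_mul_r, sr.injEq, sub_eq_iff_eq_add, add_assoc, left_eq_add]
    split_ifs with h
    · rw [Nat.card_congr (Equiv.subtypeUnivEquiv fun j => (hiff j).mpr h), Nat.card_zmod]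
    · haveI : IsEmpty {j : ZMod n // r i * sr j = sr j * r i} :=
        ⟨fun x => h ((hiff x.1).mp x.2)⟩
      exact Nat.card_of_isEmpty

lemma cnt_sr (hn : Even n) (hn0 : 0 < n) (i : ZMod n) :
    Nat.card {h : DihedralGroup n // sr i * h = h * sr i} = 4 := by
  haveI : NeZero n := ⟨hn0.ne'⟩
  rw [card_split]
  have h1 : Nat.card {j : ZMod n // sr i * r j = r j * sr i} = 2 := by
    rw [Nat.card_congr (Equiv.subtypeEquivRight (q := fun j : ZMod n => j + j = 0) fun j => by
      rw [sr_mul_r, r_mul_sr, sr.injEq, sub_eq_add_neg, add_right_inj, eq_neg_iff_add_eq_zero])]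
    exact two_torsion_card hn hn0
  have h2 : Nat.card {j : ZMod n // sr i * sr j = sr j * sr i} = 2 := by
    rw [Nat.card_congr (Equiv.subtypeEquiv (Equiv.subRight i)
      (q := fun d : ZMod n => d + d = 0) fun j => by
      rw [sr_mul_sr, sr_mul_sr, r.injEq, ← neg_sub j i, eq_neg_iff_add_eq_zero]
      rfl)]
    exact two_torsion_card hn hn0
  rw [h1, h2]

lemma card_fixedBy_conj {G : Type*} [Group G] (g : G) :
    Nat.card (MulAction.fixedBy G (ConjAct.toConjAct g)) =
      Nat.card {h : G // g * h = h * g} :=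
  Nat.card_congr (Equiv.subtypeEquivRight fun h => by
    rw [MulAction.mem_fixedBy, ConjAct.toConjAct_smul, mul_inv_eq_iff_eq_mul])

lemma card_fixedBy_pi {G : Type*} [Group G] (a : ConjAct G) (k : ℕ) :
    Nat.card (MulAction.fixedBy (Fin k → G) a) =
      Nat.card (MulAction.fixedBy G a) ^ k := by
  have e : MulAction.fixedBy (Fin k → G) a ≃ (Fin k → MulAction.fixedBy G a) :=
    (Equiv.subtypeEquivRight fun x => by
      show a • x = x ↔ ∀ i, x i ∈ MulAction.fixedBy G a
      simp [funext_iff, MulAction.mem_fixedBy]).trans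
      (Equiv.subtypePiEquivPi)
  rw [Nat.card_congr e, Nat.card_fun]; simp

lemma burnside (G : Type*) [Group G] [Fintype G] (k : ℕ) :
    alphaOrbits G k * Nat.card G =
      ∑ g : G, Nat.card (MulAction.fixedBy (Fin k → G) (ConjAct.toConjAct g)) := by
  classical
  have h := MulAction.sum_card_fixedBy_eq_card_orbits_mul_card_group (ConjAct G) (Fin k → G)
  rw [alphaOrbits, Nat.card_eq_fintype_card, Nat.card_eq_fintype_card (α := G),
    show Fintype.card G = Fintype.card (ConjAct G) from
      Fintype.card_congr ConjAct.toConjAct.toEquiv, ← h]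
  exact Fintype.sum_equiv ConjAct.ofConjAct.toEquiv _ _ fun g => Nat.card_eq_fintype_card.symm

def dihEquiv (n : ℕ) : ZMod n ⊕ ZMod n ≃ DihedralGroup n where
  toFun x := match x with
    | Sum.inl j => r j
    | Sum.inr j => sr j
  invFun g := match g with
    | r j => Sum.inl j
    | sr j => Sum.inr j
  left_inv := by rintro (x | x) <;> rfl
  right_inv := by rintro (x | x) <;> rfl

lemma filter_two_torsion_card [NeZero n] (hn : Even n) (hn0 : 0 < n) :
    (Finset.univ.filter (fun j : ZMod n => j + j = 0)).card = 2 := by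
  have h := two_torsion_card hn hn0
  rw [Nat.card_eq_fintype_card, Fintype.card_subtype] at h
  convert h using 2


/-- For the dihedral group of order `2n` with `n` even:
`α_{D_{2n},k} = (1/2n)(2(2n)^k + n·4^k + (n-2)·n^k)`. -/
theorem dihedral_even_alpha (n : ℕ) (hn : Even n) (hn0 : 0 < n) (k : ℕ) (hk : 1 ≤ k) :
    2 * n * alphaOrbits (DihedralGroup n) k =
      2 * (2 * n) ^ k + n * 4 ^ k + (n - 2) * n ^ k := by
  haveI : NeZero n := ⟨hn0.ne'⟩
  have hb := burnside (DihedralGroup n) k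
  rw [DihedralGroup.nat_card] at hb
  have hsum : ∑ g : DihedralGroup n,
      Nat.card (MulAction.fixedBy (Fin k → DihedralGroup n) (ConjAct.toConjAct g)) =
      2 * (2 * n) ^ k + n * 4 ^ k + (n - 2) * n ^ k := by
    simp_rw [card_fixedBy_pi, card_fixedBy_conj]
    rw [← Fintype.sum_equiv (dihEquiv n)
      (fun x => Nat.card {h : DihedralGroup n // dihEquiv n x * h = h * dihEquiv n x} ^ k)
      _ (fun x => rfl), Fintype.sum_sum_type]
    have hr : ∀ i : ZMod n,
        Nat.card {h : DihedralGroup n // r i * h = h * r i} ^ k =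
          if i + i = 0 then (2 * n) ^ k else n ^ k := by
      intro i
      rw [cnt_r]
      split_ifs with h
      · rw [two_mul]
      · rw [add_zero]
    have hs : ∀ i : ZMod n,
        Nat.card {h : DihedralGroup n // sr i * h = h * sr i} ^ k = 4 ^ k := fun i => by
      rw [cnt_sr hn hn0]
    simp only [dihEquiv, Equiv.coe_fn_mk]
    rw [Finset.sum_congr rfl (fun i _ => hr i), Finset.sum_congr rfl (fun i _ => hs i),
      Finset.sum_ite, Finset.sum_const, Finset.sum_const, Finset.sum_const,
      filter_two_torsion_card hn hn0]
    have hcc : (Finset.univ.filter (fun j : ZMod n => ¬ j + j = 0)).card = n - 2 := by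
      have h4 := Finset.card_filter_add_card_filter_not
        (s := (Finset.univ : Finset (ZMod n))) (p := fun j : ZMod n => j + j = 0)
      rw [filter_two_torsion_card hn hn0, Finset.card_univ, ZMod.card] at h4
      omega
    rw [hcc, Finset.card_univ, ZMod.card]
    simp only [smul_eq_mul]
    ring_nf
  rw [hsum] at hb
  rw [← hb]
  ring
end

section
/- Let G be a Frobenius group with abelian kernel N and abelian complement H. Then the number of conjugacy classes of G is k(G) = (|N|−1)/|H| + |H|, and more generally the number β_{G,n} of simultaneous conjugacy classes of commuting n-tuples satisfies (β_{G,n} − β_{G,n−1}) = (1/|H|)(|N|^n − |N|^{n−1}) + (|H|^n − |H|^{n−1}) for n ≥ 1, equivalently (1−t)B_G(t) = 1 + ((|N|−1)t)/(|H|(1−|N|t)) + ((|H|−1)t)/(1−|H|t). -/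
/-!
The kernel `N` and the conjugates of `H` cover `G`, meet pairwise in `1`, and each of them is the
centralizer of any of its nontrivial elements. So a nontrivial commuting `n`-tuple lies in exactly
one of these abelian subgroups. As `H` is self-normalizing it has `[G : H]` conjugates, and
counting elements (`n = 1`) gives `[G : H] = |N|`; so `|G| = |N| |H|` and `G` has
`|N|^n + |N| |H|^n - |N|` commuting `n`-tuples. Burnside's lemma for the conjugation action on commuting `n`-tuples gives
`β_{G,n} |G| = #(commuting (n+1)-tuples)`, hence `β_{G,n} |H| + 1 = |N|^n + |H|^(n+1)`, and
likewise `k(G) |H| + 1 = |N| + |H|^2`.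
-/

open MulAction Pointwise

section CommutingTuples

variable {G : Type*} [Group G]

theorem conjAct_smul_pi_eq_self_iff {ι : Type*} (g : ConjAct G) (x : ι → G) :
    g • x = x ↔ ∀ i, Commute (ConjAct.ofConjAct g) (x i) := by
  simp only [funext_iff, Pi.smul_apply, ConjAct.smul_def, mul_inv_eq_iff_eq_mul]
  rfl

theorem cons_mem_commTuples_iff {n : ℕ} {g : G} {x : Fin n → G} :
    (Fin.cons g x : Fin (n + 1) → G) ∈ commTuples G (n + 1) ↔
      (∀ i, Commute g (x i)) ∧ x ∈ commTuples G n := by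
  refine ⟨fun h => ⟨fun i => h 0 i.succ, fun i j => h i.succ j.succ⟩, ?_⟩
  rintro ⟨hg, hx⟩ i j
  cases i using Fin.cases <;> cases j using Fin.cases <;>
    simp only [Fin.cons_zero, Fin.cons_succ, Commute.refl, hg, (hg _).symm, hx _ _]

def commTuplesSuccEquiv (n : ℕ) :
    commTuples G (n + 1) ≃ Σ g : ConjAct G, fixedBy (commTuples G n) g where
  toFun x :=
    have hx := (cons_mem_commTuples_iff (g := x.1 0) (x := Fin.tail x.1)).1
      (by simpa only [Fin.cons_self_tail] using x.2)
    ⟨ConjAct.toConjAct (x.1 0), ⟨Fin.tail x.1, hx.2⟩,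
      Subtype.ext ((conjAct_smul_pi_eq_self_iff _ _).2 hx.1)⟩
  invFun p := ⟨Fin.cons (ConjAct.ofConjAct p.1) p.2.1.1, cons_mem_commTuples_iff.2
      ⟨(conjAct_smul_pi_eq_self_iff _ _).1 (congrArg Subtype.val p.2.2), p.2.1.2⟩⟩
  left_inv x := Subtype.ext (Fin.cons_self_tail x.1)
  right_inv p := by
    rcases p with ⟨g, ⟨x, hx⟩, hfix⟩
    rfl

def commTuplesOneEquiv : commTuples G 1 ≃ G where
  toFun x := x.1 0
  invFun g := ⟨fun _ => g, fun _ _ => Commute.refl g⟩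
  left_inv x := Subtype.ext (funext fun i => by rw [Fin.fin_one_eq_zero i])
  right_inv g := rfl

def commTuplesTwoEquiv : commTuples G 2 ≃ {p : G × G // Commute p.1 p.2} where
  toFun x := ⟨(x.1 0, x.1 1), x.2 0 1⟩
  invFun p := ⟨![p.1.1, p.1.2], by
    intro i j
    fin_cases i <;> fin_cases j
    exacts [Commute.refl _, p.2, p.2.symm, Commute.refl _]⟩
  left_inv x := Subtype.ext (funext fun i => by fin_cases i <;> rfl)
  right_inv p := rfl

theorem betaOrbits_mul_card [Finite G] (n : ℕ) :
    betaOrbits G n * Nat.card G = Nat.card (commTuples G (n + 1)) := by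
  classical
  have := Fintype.ofFinite G
  have := Fintype.ofFinite (commTuples G n)
  have := Fintype.ofFinite (Quotient (orbitRel (ConjAct G) (commTuples G n)))
  have burnside := sum_card_fixedBy_eq_card_orbits_mul_card_group (ConjAct G) (commTuples G n)
  simp only [← Nat.card_eq_fintype_card] at burnside
  rw [Nat.card_congr (commTuplesSuccEquiv n), Nat.card_sigma, burnside, betaOrbits,
    Nat.card_congr ConjAct.ofConjAct.toEquiv]

theorem card_conjClasses_mul_card :
    Nat.card (ConjClasses G) * Nat.card G = Nat.card (commTuples G 2) := by
  rw [← card_comm_eq_card_conjClasses_mul_card, Nat.card_congr commTuplesTwoEquiv]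

end CommutingTuples

section CentralizerPartition

variable {G ι : Type*} [Group G]

structure IsCentralizerPartition (A : ι → Subgroup G) : Prop where
  injective : Function.Injective A
  exists_mem : ∀ g : G, g ≠ 1 → ∃ i, g ∈ A i
  centralizer_eq : ∀ i, ∀ x ∈ A i, x ≠ 1 → Subgroup.centralizer {x} = A i

namespace IsCentralizerPartition

variable {A : ι → Subgroup G} (hA : IsCentralizerPartition A)
include hA

theorem commute_of_mem {i : ι} {x y : G} (hx : x ∈ A i) (hy : y ∈ A i) : Commute x y := by
  by_cases hy1 : y = 1
  · rw [hy1]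
    exact Commute.one_right x
  · rwa [← hA.centralizer_eq i y hy hy1, Subgroup.mem_centralizer_singleton_iff] at hx

theorem eq_of_mem {i j : ι} {x : G} (hi : x ∈ A i) (hj : x ∈ A j) (hx : x ≠ 1) : i = j :=
  hA.injective ((hA.centralizer_eq i x hi hx).symm.trans (hA.centralizer_eq j x hj hx))

theorem exists_forall_mem {n : ℕ} {x : Fin n → G} (hx : x ∈ commTuples G n) (hx1 : x ≠ 1) :
    ∃ i, ∀ k, x k ∈ A i := by
  obtain ⟨k₀, hk₀⟩ := Function.ne_iff.1 hx1
  obtain ⟨i, hi⟩ := hA.exists_mem (x k₀) hk₀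
  refine ⟨i, fun k => ?_⟩
  rw [← hA.centralizer_eq i _ hi hk₀, Subgroup.mem_centralizer_singleton_iff]
  exact hx k k₀

theorem card_commTuples [Finite G] [Fintype ι] (n : ℕ) :
    Nat.card (commTuples G n) = 1 + ∑ i, (Nat.card (A i) ^ n - 1) := by
  set P : ι → Set (Fin n → G) := fun i => Set.univ.pi (fun _ => (A i : Set G)) \ {1}
  have hT : (commTuples G n : Set (Fin n → G)) = insert 1 (⋃ i, P i) := by
    ext x
    by_cases hx1 : x = 1
    · simp only [hx1, Set.mem_insert_iff, true_or, iff_true]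
      exact fun _ _ => Commute.one_left 1
    simp only [Set.mem_insert_iff, hx1, false_or, Set.mem_iUnion, P, Set.mem_sdiff,
      Set.mem_univ_pi, SetLike.mem_coe, Set.mem_singleton_iff, not_false_eq_true, and_true]
    exact ⟨fun hx => hA.exists_forall_mem hx hx1,
      fun ⟨i, hi⟩ k l => hA.commute_of_mem (hi k) (hi l)⟩
  have hdisj : Pairwise (Function.onFun Disjoint P) := by
    intro i j hij
    refine Set.disjoint_left.2 fun x hxi hxj => hxi.2 ?_
    obtain ⟨k, hk⟩ := Function.ne_iff.1 hxi.2
    exact absurd (hA.eq_of_mem (hxi.1 k trivial) (hxj.1 k trivial) hk) hij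
  have hP (i : ι) : Nat.card (P i) = Nat.card (A i) ^ n - 1 := by
    have h1 : (1 : Fin n → G) ∈ Set.univ.pi fun _ => (A i : Set G) :=
      Set.mem_univ_pi.2 fun _ => (A i).one_mem
    rw [Nat.card_coe_set_eq, Set.ncard_sdiff_singleton_of_mem h1, ← Nat.card_coe_set_eq,
      Nat.card_congr (Equiv.Set.univPi _), Nat.card_fun, Nat.card_fin]
    rfl
  calc Nat.card (commTuples G n)
      = (insert 1 (⋃ i, P i)).ncard := by rw [← hT]; exact Nat.card_coe_set_eq _
    _ = 1 + Nat.card (⋃ i, P i) := by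
        rw [Set.ncard_insert_of_notMem (fun h => ?_) (Set.toFinite _), Nat.card_coe_set_eq,
          add_comm]
        obtain ⟨i, hi⟩ := Set.mem_iUnion.1 h
        exact hi.2 rfl
    _ = 1 + ∑ i, (Nat.card (A i) ^ n - 1) := by
        rw [Nat.card_congr (Set.unionEqSigmaOfDisjoint hdisj), Nat.card_sigma]
        simp only [hP]

end IsCentralizerPartition

end CentralizerPartition

namespace Frobenius

variable {G : Type*} [Group G] {H N : Subgroup G}
  (hHbot : H ≠ ⊥)
  (hfrob : ∀ g : G, g ∉ H → H ⊓ H.map (MulAut.conj g).toMonoidHom = ⊥)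
  (hN : (N : Set G) =
      (Set.univ \ ⋃ g : G, (H.map (MulAut.conj g).toMonoidHom : Set G)) ∪ {1})
  (hNab : ∀ x ∈ N, ∀ y ∈ N, x * y = y * x)
  (hHab : ∀ x ∈ H, ∀ y ∈ H, x * y = y * x)

include hfrob in
theorem mem_of_commute_of_mem {x y : G} (hx : x ∈ H) (hx1 : x ≠ 1) (hxy : Commute y x) :
    y ∈ H := by
  by_contra hy
  have hx' : x ∈ H.map (MulAut.conj y).toMonoidHom :=
    ⟨x, hx, by simp [MulAut.conj_apply, hxy.eq]⟩
  exact hx1 (Subgroup.mem_bot.1 (hfrob y hy ▸ Subgroup.mem_inf.2 ⟨hx, hx'⟩))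

include hfrob in
theorem mem_of_commute_of_mem_orbit {K : Subgroup G} (hK : K ∈ orbit (ConjAct G) H)
    {x y : G} (hx : x ∈ K) (hx1 : x ≠ 1) (hxy : Commute y x) : y ∈ K := by
  obtain ⟨g, rfl⟩ := hK
  rw [Subgroup.mem_pointwise_smul_iff_inv_smul_mem] at hx ⊢
  exact mem_of_commute_of_mem hfrob hx (fun h => hx1 (by rw [← smul_inv_smul g x, h, smul_one]))
    (hxy.map (MulDistribMulAction.toMonoidHom G g⁻¹))

include hHab in
theorem commute_of_mem_orbit {K : Subgroup G} (hK : K ∈ orbit (ConjAct G) H)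
    {x y : G} (hx : x ∈ K) (hy : y ∈ K) : Commute x y := by
  obtain ⟨g, rfl⟩ := hK
  rw [Subgroup.mem_pointwise_smul_iff_inv_smul_mem] at hx hy
  simpa using (Commute.map (hHab _ hx _ hy) (MulDistribMulAction.toMonoidHom G g))

include hHbot hfrob in
theorem normalizer_eq_self : Subgroup.normalizer (H : Set G) = H := by
  refine le_antisymm (fun g hg => ?_) Subgroup.le_normalizer
  by_contra hgH
  have h := hfrob g hgH
  rw [show H.map (MulAut.conj g).toMonoidHom = ConjAct.toConjAct g • H from rfl,
    Subgroup.conjAct_pointwise_smul_eq_self hg, inf_idem] at h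
  exact hHbot h

include hHbot hfrob in
theorem card_orbit_mul_card : Nat.card (orbit (ConjAct G) H) * Nat.card H = Nat.card G := by
  have hstab : Nat.card (stabilizer (ConjAct G) H) = Nat.card H :=
    Nat.card_congr <| ConjAct.ofConjAct.toEquiv.subtypeEquiv fun g => by
      change ConjAct.toConjAct (ConjAct.ofConjAct g) • H = H ↔ _
      rw [Subgroup.conjAct_pointwise_smul_iff, normalizer_eq_self hHbot hfrob]
      rfl
  rw [Nat.card_coe_set_eq, ← index_stabilizer, ← hstab, Subgroup.index_mul_card,
    Nat.card_congr ConjAct.ofConjAct.toEquiv]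

include hN in
theorem mem_kernel_iff {x : G} : x ∈ N ↔ x = 1 ∨ ∀ K ∈ orbit (ConjAct G) H, x ∉ K := by
  rw [← SetLike.mem_coe, hN, or_comm]
  simp only [Set.mem_union, Set.mem_singleton_iff, Set.mem_sdiff, Set.mem_univ, true_and,
    Set.mem_iUnion, not_exists, orbit, Set.forall_mem_range]
  rfl

include hfrob hHab in
theorem centralizer_eq_of_mem_orbit {K : Subgroup G} (hK : K ∈ orbit (ConjAct G) H)
    {x : G} (hx : x ∈ K) (hx1 : x ≠ 1) : Subgroup.centralizer {x} = K := by
  ext y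
  rw [Subgroup.mem_centralizer_singleton_iff]
  exact ⟨fun hy => mem_of_commute_of_mem_orbit hfrob hK hx hx1 hy,
    fun hy => commute_of_mem_orbit hHab hK hy hx⟩

include hfrob hN hNab in
theorem centralizer_eq_of_mem_kernel {x : G} (hx : x ∈ N) (hx1 : x ≠ 1) :
    Subgroup.centralizer {x} = N := by
  ext y
  rw [Subgroup.mem_centralizer_singleton_iff]
  refine ⟨fun hy => ?_, fun hy => hNab y hy x hx⟩
  by_contra hyN
  rw [mem_kernel_iff hN] at hx hyN
  push Not at hyN
  obtain ⟨hy1, K, hK, hyK⟩ := hyN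
  exact hx.resolve_left hx1 K hK (mem_of_commute_of_mem_orbit hfrob hK hyK hy1 hy.symm)

include hHbot hN in
theorem ne_kernel_of_mem_orbit {K : Subgroup G} (hK : K ∈ orbit (ConjAct G) H) : K ≠ N := by
  rintro rfl
  obtain ⟨g, rfl⟩ := hK
  obtain ⟨h, hH, hh1⟩ := H.bot_or_exists_ne_one.resolve_left hHbot
  have hgh := Subgroup.smul_mem_pointwise_smul h g H hH
  rcases (mem_kernel_iff hN).1 hgh with h1 | hnot
  · exact hh1 (by rw [← inv_smul_smul g h, h1, smul_one])
  · exact hnot _ (mem_orbit H g) hgh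

def frobeniusPartition (H N : Subgroup G) : Option (orbit (ConjAct G) H) → Subgroup G :=
  fun o => o.elim N Subtype.val

include hHbot hfrob hN hNab hHab in
theorem isCentralizerPartition_frobeniusPartition :
    IsCentralizerPartition (frobeniusPartition H N) where
  injective := by
    rintro (_ | ⟨K, hK⟩) (_ | ⟨K', hK'⟩) h
    · rfl
    · exact absurd h.symm (ne_kernel_of_mem_orbit hHbot hN hK')
    · exact absurd h (ne_kernel_of_mem_orbit hHbot hN hK)
    · exact congrArg some (Subtype.ext h)
  exists_mem g hg := by
    by_cases hgN : g ∈ N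
    · exact ⟨none, hgN⟩
    rw [mem_kernel_iff hN] at hgN
    push Not at hgN
    obtain ⟨-, K, hK, hgK⟩ := hgN
    exact ⟨some ⟨K, hK⟩, hgK⟩
  centralizer_eq := by
    rintro (_ | ⟨K, hK⟩) x hx hx1
    · exact centralizer_eq_of_mem_kernel hfrob hN hNab hx hx1
    · exact centralizer_eq_of_mem_orbit hfrob hHab hK hx hx1

variable [Finite G]
include hHbot hfrob hN hNab hHab

theorem card_commTuples_eq (m : ℕ) :
    Nat.card (commTuples G m) =
      1 + (Nat.card N ^ m - 1) + Nat.card (orbit (ConjAct G) H) * (Nat.card H ^ m - 1) := by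
  have := Fintype.ofFinite (orbit (ConjAct G) H)
  have hK (K : orbit (ConjAct G) H) : Nat.card (K : Subgroup G) = Nat.card H := by
    obtain ⟨K, g, rfl⟩ := K
    exact Nat.card_congr (Subgroup.equivSMul g H).toEquiv.symm
  rw [(isCentralizerPartition_frobeniusPartition hHbot hfrob hN hNab hHab).card_commTuples,
    Fintype.sum_option, add_assoc]
  simp only [frobeniusPartition, Option.elim, hK, Finset.sum_const, Finset.card_univ,
    smul_eq_mul, Nat.card_eq_fintype_card]

theorem card_orbit_eq_card_kernel : Nat.card (orbit (ConjAct G) H) = Nat.card N := by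
  have h1 := card_commTuples_eq hHbot hfrob hN hNab hHab 1
  have horb := card_orbit_mul_card hHbot hfrob
  rw [Nat.card_congr commTuplesOneEquiv, pow_one, pow_one] at h1
  have hN1 : 1 ≤ Nat.card N := Nat.card_pos
  have hH1 : 1 ≤ Nat.card H := Nat.card_pos
  zify [hN1, hH1] at h1 horb ⊢
  linarith

theorem card_commTuples_add_card_kernel (m : ℕ) :
    Nat.card (commTuples G m) + Nat.card N = Nat.card N ^ m + Nat.card N * Nat.card H ^ m := by
  have h := card_commTuples_eq hHbot hfrob hN hNab hHab m
  rw [card_orbit_eq_card_kernel hHbot hfrob hN hNab hHab] at h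
  have hN1 : 1 ≤ Nat.card N ^ m := Nat.one_le_pow _ _ Nat.card_pos
  have hH1 : 1 ≤ Nat.card H ^ m := Nat.one_le_pow _ _ Nat.card_pos
  zify [hN1, hH1] at h ⊢
  linarith

theorem card_eq_card_kernel_mul_card : Nat.card G = Nat.card N * Nat.card H := by
  rw [← card_orbit_mul_card hHbot hfrob, card_orbit_eq_card_kernel hHbot hfrob hN hNab hHab]

theorem betaOrbits_mul_card_add_one (n : ℕ) :
    betaOrbits G n * Nat.card H + 1 = Nat.card N ^ n + Nat.card H ^ (n + 1) := by
  refine Nat.eq_of_mul_eq_mul_left (Nat.card_pos (α := N)) ?_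
  have hβ := betaOrbits_mul_card (G := G) n
  have hT := card_commTuples_add_card_kernel hHbot hfrob hN hNab hHab (n + 1)
  rw [card_eq_card_kernel_mul_card hHbot hfrob hN hNab hHab] at hβ
  calc Nat.card N * (betaOrbits G n * Nat.card H + 1)
      = betaOrbits G n * (Nat.card N * Nat.card H) + Nat.card N := by ring
    _ = Nat.card N * (Nat.card N ^ n + Nat.card H ^ (n + 1)) := by rw [hβ, hT]; ring

theorem card_conjClasses_mul_card_add_one :
    Nat.card (ConjClasses G) * Nat.card H + 1 = Nat.card N + Nat.card H ^ 2 := by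
  refine Nat.eq_of_mul_eq_mul_left (Nat.card_pos (α := N)) ?_
  have hk := card_conjClasses_mul_card (G := G)
  have hT := card_commTuples_add_card_kernel hHbot hfrob hN hNab hHab 2
  rw [card_eq_card_kernel_mul_card hHbot hfrob hN hNab hHab] at hk
  calc Nat.card N * (Nat.card (ConjClasses G) * Nat.card H + 1)
      = Nat.card (ConjClasses G) * (Nat.card N * Nat.card H) + Nat.card N := by ring
    _ = Nat.card N * (Nat.card N + Nat.card H ^ 2) := by rw [hk, hT]; ring

end Frobenius

theorem frobenius_abelian_beta_general (G : Type*) [Group G] [Fintype G] (H N : Subgroup G)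
    (hHbot : H ≠ ⊥)
    (hfrob : ∀ g : G, g ∉ H → H ⊓ H.map (MulAut.conj g).toMonoidHom = ⊥)
    (hN : (N : Set G) =
      (Set.univ \ ⋃ g : G, (H.map (MulAut.conj g).toMonoidHom : Set G)) ∪ {1})
    (hNab : ∀ x ∈ N, ∀ y ∈ N, x * y = y * x)
    (hHab : ∀ x ∈ H, ∀ y ∈ H, x * y = y * x) :
    (Nat.card (ConjClasses G) : ℚ) =
        ((Nat.card N : ℚ) - 1) / (Nat.card H : ℚ) + (Nat.card H : ℚ) ∧
      ∀ n : ℕ, 1 ≤ n →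
        (betaOrbits G n : ℚ) - (betaOrbits G (n - 1) : ℚ) =
          (1 / (Nat.card H : ℚ)) *
              ((Nat.card N : ℚ) ^ n - (Nat.card N : ℚ) ^ (n - 1)) +
            ((Nat.card H : ℚ) ^ n - (Nat.card H : ℚ) ^ (n - 1)) := by
  have hH : (Nat.card H : ℚ) ≠ 0 := Nat.cast_ne_zero.2 Nat.card_pos.ne'
  have hk : (Nat.card (ConjClasses G) * Nat.card H + 1 : ℚ) = Nat.card N + Nat.card H ^ 2 := by
    exact_mod_cast Frobenius.card_conjClasses_mul_card_add_one hHbot hfrob hN hNab hHab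
  have hβ (n : ℕ) :
      (betaOrbits G n * Nat.card H + 1 : ℚ) = Nat.card N ^ n + Nat.card H ^ (n + 1) := by
    exact_mod_cast Frobenius.betaOrbits_mul_card_add_one hHbot hfrob hN hNab hHab n
  refine ⟨?_, fun n hn => ?_⟩
  · field_simp
    linear_combination hk
  · obtain ⟨m, rfl⟩ := Nat.exists_eq_add_of_le' hn
    rw [Nat.add_sub_cancel]
    field_simp
    linear_combination hβ (m + 1) - hβ m

/-- For a Frobenius group with abelian kernel `N` and abelian complement `H`:
`k(G) = (|N|-1)/|H| + |H|` and
`β_{G,n} - β_{G,n-1} = (1/|H|)(|N|^n - |N|^{n-1}) + (|H|^n - |H|^{n-1})` for `n ≥ 1`. -/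
theorem frobenius_abelian_beta (G : Type*) [Group G] [Fintype G] (H N : Subgroup G)
    (hHbot : H ≠ ⊥) (hHtop : H ≠ ⊤)
    (hfrob : ∀ g : G, g ∉ H → H ⊓ H.map (MulAut.conj g).toMonoidHom = ⊥)
    (hN : (N : Set G) =
      (Set.univ \ ⋃ g : G, (H.map (MulAut.conj g).toMonoidHom : Set G)) ∪ {1})
    (hNab : ∀ x ∈ N, ∀ y ∈ N, x * y = y * x)
    (hHab : ∀ x ∈ H, ∀ y ∈ H, x * y = y * x) :
    (Nat.card (ConjClasses G) : ℚ) =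
        ((Nat.card N : ℚ) - 1) / (Nat.card H : ℚ) + (Nat.card H : ℚ) ∧
      ∀ n : ℕ, 1 ≤ n →
        (betaOrbits G n : ℚ) - (betaOrbits G (n - 1) : ℚ) =
          (1 / (Nat.card H : ℚ)) *
              ((Nat.card N : ℚ) ^ n - (Nat.card N : ℚ) ^ (n - 1)) +
            ((Nat.card H : ℚ) ^ n - (Nat.card H : ℚ) ^ (n - 1)) :=
  frobenius_abelian_beta_general G H N hHbot hfrob hN hNab hHab
end
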